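/- Let φ : (G′,g′) → (G,g) be a finite harmonic morphism of weighted graphs, let F be a subgraph of G, and let F′ = φ^{-1}(F). Then F′ is a subgraph of G′, the restriction φ|_{F′} : F′ → F (with the restricted degree function and weights) is a finite harmonic morphism, and for every vertex v′ of F′ one has Ram_{φ|_{F′}}(v′) ≥ Ram_φ(v′), where the ramification degrees are computed with the valencies of F′ and F, respectively of G′ and G. In particular, if φ is effective then so is φ|_{F′}. -/

import Mathlib

namespace TropDR

open Finset

/-- `Finset.filter` with classical decidability. -/
noncomputable def cfilter {α : Type*} (p : α → Prop) (s : Finset α) : Finset α :=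
  @Finset.filter α p (Classical.decPred p) s

/-- A graph with legs: a finite set `X` together with an idempotent root map `rt`
and an involution `inv` fixing every root vertex. -/
structure PGraph where
  X : Type
  [fintypeX : Fintype X]
  [decEqX : DecidableEq X]
  rt : X → X
  inv : X → X
  rt_idem : ∀ x, rt (rt x) = rt x
  inv_invol : ∀ x, inv (inv x) = x
  inv_fix_rt : ∀ x, inv (rt x) = rt x

attribute [instance] PGraph.fintypeX PGraph.decEqX

namespace PGraph

variable (G : PGraph)

/-- Vertices are the fixed points (= the image) of the root map. -/
def IsVertex (x : G.X) : Prop := G.rt x = x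

/-- Half-edges are the non-vertices. -/
def IsHalf (x : G.X) : Prop := G.rt x ≠ x

/-- Legs are the `inv`-fixed half-edges. -/
def IsLeg (x : G.X) : Prop := G.IsHalf x ∧ G.inv x = x

/-- Halves of genuine edges: half-edges moved by the involution. -/
def IsEdgeHalf (x : G.X) : Prop := G.IsHalf x ∧ G.inv x ≠ x

noncomputable def vertexSet : Finset G.X := cfilter (fun x => G.IsVertex x) Finset.univ

noncomputable def legSet : Finset G.X := cfilter (fun x => G.IsLeg x) Finset.univ

noncomputable def edgeHalfSet : Finset G.X := cfilter (fun x => G.IsEdgeHalf x) Finset.univ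

/-- Tangent directions at a vertex `v`: half-edges rooted at `v`. -/
noncomputable def tangents (v : G.X) : Finset G.X :=
  cfilter (fun h => G.IsHalf h ∧ G.rt h = v) Finset.univ

noncomputable def valence (v : G.X) : ℕ := (G.tangents v).card

/-- The number of edges: half the number of edge half-edges. -/
noncomputable def numEdges : ℕ := G.edgeHalfSet.card / 2

noncomputable def numLegs : ℕ := G.legSet.card

noncomputable def numVertices : ℕ := G.vertexSet.card

/-- Connectedness: the equivalence relation generated by `x ∼ rt x` and `x ∼ inv x`
has a single class (and `X` is nonempty). -/
def Connected : Prop :=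
  Nonempty G.X ∧ ∀ x y : G.X, Relation.EqvGen (fun a b => G.rt a = b ∨ G.inv a = b) x y

/-- A subgraph: a subset of `X` closed under the root map and the involution. -/
def IsSubgraph (F : Finset G.X) : Prop :=
  (∀ x ∈ F, G.rt x ∈ F) ∧ (∀ x ∈ F, G.inv x ∈ F)

/-- Valency of `v` inside a subgraph `F`. -/
noncomputable def valIn (F : Finset G.X) (v : G.X) : ℕ := (G.tangents v ∩ F).card

end PGraph

/-- A morphism of graphs: commutes with the root maps and involutions,
and maps no edge into a leg. -/
structure GraphHom (G' G : PGraph) where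
  toFun : G'.X → G.X
  map_rt : ∀ x, toFun (G'.rt x) = G.rt (toFun x)
  map_inv : ∀ x, toFun (G'.inv x) = G.inv (toFun x)
  edge_not_leg : ∀ h, G'.IsEdgeHalf h → ¬ G.IsLeg (toFun h)

/-- A harmonic morphism of graphs: a graph morphism together with a degree function. -/
structure HarmonicHom (G' G : PGraph) extends GraphHom G' G where
  deg : G'.X → ℕ
  deg_edge : ∀ h, G'.IsEdgeHalf h → deg (G'.inv h) = deg h
  deg_zero_iff : ∀ h, G'.IsHalf h → (deg h = 0 ↔ G.IsVertex (toFun h))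
  harmonic : ∀ v', G'.IsVertex v' → ∀ h, G.IsHalf h → G.rt h = toFun v' →
    deg v' = ∑ h' ∈ cfilter (fun h' => toFun h' = h) (G'.tangents v'), deg h'

namespace HarmonicHom

variable {G' G : PGraph} (φ : HarmonicHom G' G)

/-- A harmonic morphism is finite if it has positive degree on every half-edge. -/
def Finite : Prop := ∀ h, G'.IsHalf h → 0 < φ.deg h

/-- The sum of the degrees over the vertex fiber of `v`. -/
noncomputable def vertexFiberDeg (v : G.X) : ℕ :=
  ∑ v' ∈ cfilter (fun v' => φ.toFun v' = v) G'.vertexSet, φ.deg v'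

end HarmonicHom

/-- A weighted graph: a graph together with a genus function on (all elements;
only the values at vertices are relevant). -/
structure WGraph extends PGraph where
  gw : X → ℕ

namespace WGraph

variable (G : WGraph)

/-- The genus of a (connected) weighted graph. -/
noncomputable def genus : ℤ :=
  (G.toPGraph.numEdges : ℤ) - (G.toPGraph.numVertices : ℤ) + 1 +
    ∑ v ∈ G.toPGraph.vertexSet, (G.gw v : ℤ)

/-- The Euler characteristic of a vertex. -/
noncomputable def chiV (v : G.X) : ℤ :=
  2 - 2 * (G.gw v : ℤ) - (G.toPGraph.valence v : ℤ)

/-- The Euler characteristic of a (connected) weighted graph. -/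
noncomputable def chi : ℤ := 2 - 2 * G.genus - (G.toPGraph.numLegs : ℤ)

end WGraph

/-- The ramification degree of a (finite) harmonic morphism of weighted graphs at `v'`. -/
noncomputable def ram {G' G : WGraph} (φ : HarmonicHom G'.toPGraph G.toPGraph) (v' : G'.X) : ℤ :=
  (φ.deg v' : ℤ) * G.chiV (φ.toFun v') - G'.chiV v'

def Unramified {G' G : WGraph} (φ : HarmonicHom G'.toPGraph G.toPGraph) : Prop :=
  ∀ v', G'.toPGraph.IsVertex v' → ram φ v' = 0

def Effective {G' G : WGraph} (φ : HarmonicHom G'.toPGraph G.toPGraph) : Prop :=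
  ∀ v', G'.toPGraph.IsVertex v' → 0 ≤ ram φ v'

/-- The graph structure induced on a subgraph `F` of `G`. -/
noncomputable def PGraph.restrict (G : PGraph) (F : Finset G.X) (hF : G.IsSubgraph F) :
    PGraph where
  X := { x : G.X // x ∈ F }
  rt := fun x => ⟨G.rt x.1, hF.1 x.1 x.2⟩
  inv := fun x => ⟨G.inv x.1, hF.2 x.1 x.2⟩
  rt_idem := fun x => Subtype.ext (G.rt_idem x.1)
  inv_invol := fun x => Subtype.ext (G.inv_invol x.1)
  inv_fix_rt := fun x => Subtype.ext (G.inv_fix_rt x.1)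

/-- The weighted graph structure induced on a subgraph `F` of a weighted graph `G`. -/
noncomputable def WGraph.wrestrict (G : WGraph) (F : Finset G.X)
    (hF : G.toPGraph.IsSubgraph F) : WGraph where
  toPGraph := G.toPGraph.restrict F hF
  gw := fun x => G.gw x.1

/-! A finite morphism sends half-edges to half-edges, so it maps the tangent directions at `v'`
leaving `F' = φ⁻¹(F)` into the tangent directions at `φ(v')` leaving `F`. By harmonicity each
fibre of this map has at most `d_φ(v')` elements, since every half-edge in it has degree at
least one. Passing to `F'` and `F` raises `Ram` by `d_φ(v')` times the number of lost directions
at `φ(v')` minus the number of lost directions at `v'`, which is therefore nonnegative.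
Harmonicity of the restriction holds because all preimages of a direction in `F` lie in `F'`. -/

lemma mem_cfilter {α : Type*} {p : α → Prop} {s : Finset α} {x : α} :
    x ∈ cfilter p s ↔ x ∈ s ∧ p x :=
  @Finset.mem_filter _ _ (Classical.decPred p) _ _

namespace PGraph

variable {G : PGraph}

lemma mem_tangents {v h : G.X} : h ∈ G.tangents v ↔ G.IsHalf h ∧ G.rt h = v := by
  simp [tangents, mem_cfilter]

section Restrict

variable {F : Finset G.X} (hF : G.IsSubgraph F)

lemma restrict_isVertex (x : (G.restrict F hF).X) :
    (G.restrict F hF).IsVertex x ↔ G.IsVertex x.1 :=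
  Subtype.ext_iff

lemma restrict_isHalf (x : (G.restrict F hF).X) :
    (G.restrict F hF).IsHalf x ↔ G.IsHalf x.1 :=
  not_congr Subtype.ext_iff

lemma restrict_isLeg (x : (G.restrict F hF).X) :
    (G.restrict F hF).IsLeg x ↔ G.IsLeg x.1 :=
  and_congr (restrict_isHalf hF x) Subtype.ext_iff

lemma restrict_isEdgeHalf (x : (G.restrict F hF).X) :
    (G.restrict F hF).IsEdgeHalf x ↔ G.IsEdgeHalf x.1 :=
  and_congr (restrict_isHalf hF x) (not_congr Subtype.ext_iff)

lemma mem_restrict_tangents {v x : (G.restrict F hF).X} :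
    x ∈ (G.restrict F hF).tangents v ↔ x.1 ∈ G.tangents v.1 := by
  rw [mem_tangents, mem_tangents, restrict_isHalf]
  exact and_congr_right' Subtype.ext_iff

lemma valence_restrict (v : (G.restrict F hF).X) :
    (G.restrict F hF).valence v = G.valIn F v.1 := by
  refine Finset.card_bij (fun x _ => x.1) (fun x hx => ?_) (fun _ _ _ _ => Subtype.ext)
    fun y hy => ?_
  · exact Finset.mem_inter.2 ⟨(mem_restrict_tangents hF).1 hx, x.2⟩
  · obtain ⟨htan, hyF⟩ := Finset.mem_inter.1 hy
    exact ⟨⟨y, hyF⟩, (mem_restrict_tangents hF).2 htan, rfl⟩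

end Restrict

end PGraph

lemma WGraph.chiV_wrestrict (G : WGraph) {F : Finset G.X} (hF : G.IsSubgraph F)
    (v : (G.wrestrict F hF).X) :
    (G.wrestrict F hF).chiV v = G.chiV v.1 + (G.tangents v.1 \ F).card := by
  have hsplit := Finset.card_inter_add_card_sdiff (G.tangents v.1) F
  have hval : ((G.wrestrict F hF).valence v : ℤ) = G.valIn F v.1 := by
    exact_mod_cast PGraph.valence_restrict hF v
  have hgw : (G.wrestrict F hF).gw v = G.gw v.1 := rfl
  rw [WGraph.chiV, WGraph.chiV, hval, hgw, PGraph.valIn, PGraph.valence, ← hsplit]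
  push_cast
  ring

namespace GraphHom

variable {G' G : PGraph} (φ : GraphHom G' G)

noncomputable def preimage (F : Finset G.X) : Finset G'.X :=
  cfilter (fun x => φ.toFun x ∈ F) Finset.univ

lemma mem_preimage {F : Finset G.X} {x : G'.X} : x ∈ φ.preimage F ↔ φ.toFun x ∈ F := by
  simp [preimage, mem_cfilter]

lemma isSubgraph_preimage {F : Finset G.X} (hF : G.IsSubgraph F) :
    G'.IsSubgraph (φ.preimage F) := by
  constructor <;> intro x hx <;> rw [mem_preimage] at hx ⊢
  · rw [φ.map_rt]
    exact hF.1 _ hx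
  · rw [φ.map_inv]
    exact hF.2 _ hx

end GraphHom

namespace HarmonicHom

open PGraph

section Unweighted

variable {G' G : PGraph} {φ : HarmonicHom G' G}

lemma Finite.isHalf_toFun (hφ : φ.Finite) {h : G'.X} (hh : G'.IsHalf h) :
    G.IsHalf (φ.toFun h) :=
  fun hv => (hφ h hh).ne' ((φ.deg_zero_iff h hh).2 hv)

lemma Finite.card_fiber_le_deg (hφ : φ.Finite) {v' : G'.X} (hv' : G'.IsVertex v') {h : G.X}
    (hh : G.IsHalf h) (hrt : G.rt h = φ.toFun v') :
    (cfilter (fun h' => φ.toFun h' = h) (G'.tangents v')).card ≤ φ.deg v' := by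
  rw [φ.harmonic v' hv' h hh hrt, Finset.card_eq_sum_ones]
  exact Finset.sum_le_sum fun h' hh' => hφ h' (mem_tangents.1 (mem_cfilter.1 hh').1).1

lemma Finite.card_tangents_sdiff_preimage_le (hφ : φ.Finite) {v' : G'.X} (hv' : G'.IsVertex v')
    (F : Finset G.X) :
    (G'.tangents v' \ φ.preimage F).card ≤ φ.deg v' * (G.tangents (φ.toFun v') \ F).card := by
  refine Finset.card_le_mul_card_image_of_maps_to (f := φ.toFun) (fun h' hh' => ?_) _
    fun h hh => ?_
  · obtain ⟨htan, hF'⟩ := Finset.mem_sdiff.1 hh'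
    obtain ⟨hhalf, hrt⟩ := mem_tangents.1 htan
    refine Finset.mem_sdiff.2 ⟨mem_tangents.2 ⟨hφ.isHalf_toFun hhalf, ?_⟩, ?_⟩
    · rw [← φ.map_rt, hrt]
    · exact fun hmem => hF' (φ.mem_preimage.2 hmem)
  · obtain ⟨hhalf, hrt⟩ := mem_tangents.1 (Finset.mem_sdiff.1 hh).1
    refine le_trans (Finset.card_le_card fun h' hh' => ?_) (hφ.card_fiber_le_deg hv' hhalf hrt)
    obtain ⟨hmem, hfib⟩ := Finset.mem_filter.1 hh'
    exact mem_cfilter.2 ⟨(Finset.mem_sdiff.1 hmem).1, hfib⟩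

variable (φ)

noncomputable def restrictPreimage {F : Finset G.X} (hF : G.IsSubgraph F) :
    HarmonicHom (G'.restrict (φ.preimage F) (φ.isSubgraph_preimage hF)) (G.restrict F hF) where
  toFun x := ⟨φ.toFun x.1, φ.mem_preimage.1 x.2⟩
  map_rt x := Subtype.ext (φ.map_rt x.1)
  map_inv x := Subtype.ext (φ.map_inv x.1)
  edge_not_leg h hh hleg :=
    φ.edge_not_leg h.1 ((restrict_isEdgeHalf _ h).1 hh) ((restrict_isLeg hF _).1 hleg)
  deg x := φ.deg x.1
  deg_edge h hh := φ.deg_edge h.1 ((restrict_isEdgeHalf _ h).1 hh)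
  deg_zero_iff h hh :=
    (φ.deg_zero_iff h.1 ((restrict_isHalf _ h).1 hh)).trans
      (restrict_isVertex hF ⟨_, φ.mem_preimage.1 h.2⟩).symm
  harmonic v' hv' h hh hrt := by
    refine (φ.harmonic v'.1 ((restrict_isVertex _ v').1 hv') h.1 ((restrict_isHalf hF h).1 hh)
      (congrArg Subtype.val hrt)).trans ?_
    refine (Finset.sum_bij (fun x _ => x.1) (fun x hx => ?_) (fun _ _ _ _ => Subtype.ext)
      (fun y hy => ?_) fun _ _ => rfl).symm
    · rw [mem_cfilter, mem_restrict_tangents] at hx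
      exact mem_cfilter.2 ⟨hx.1, congrArg Subtype.val hx.2⟩
    · rw [mem_cfilter] at hy
      have hyF : y ∈ φ.preimage F := φ.mem_preimage.2 (hy.2 ▸ h.2)
      refine ⟨⟨y, hyF⟩, mem_cfilter.2 ⟨?_, Subtype.ext hy.2⟩, rfl⟩
      exact (mem_restrict_tangents _).2 hy.1

variable {φ}

lemma Finite.restrictPreimage (hφ : φ.Finite) {F : Finset G.X} (hF : G.IsSubgraph F) :
    (φ.restrictPreimage hF).Finite :=
  fun h hh => hφ h.1 ((restrict_isHalf _ h).1 hh)

end Unweighted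

section Weighted

variable {G' G : WGraph} {φ : HarmonicHom G'.toPGraph G.toPGraph} {F : Finset G.X}
  (hF : G.IsSubgraph F)

lemma ram_restrictPreimage
    (v' : (G'.wrestrict (φ.preimage F) (φ.isSubgraph_preimage hF)).X) :
    ram (G' := G'.wrestrict _ (φ.isSubgraph_preimage hF)) (G := G.wrestrict F hF)
        (φ.restrictPreimage hF) v' =
      ram φ v'.1 + ((φ.deg v'.1 * (G.tangents (φ.toFun v'.1) \ F).card : ℕ)
        - (G'.tangents v'.1 \ φ.preimage F).card : ℤ) := by
  have hdeg : ((φ.restrictPreimage hF).deg v' : ℤ) = φ.deg v'.1 := rfl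
  have hfun : ((φ.restrictPreimage hF).toFun v').1 = φ.toFun v'.1 := rfl
  simp only [ram, WGraph.chiV_wrestrict]
  rw [hdeg, hfun]
  push_cast
  ring

theorem Finite.ram_le_ram_restrictPreimage (hφ : φ.Finite)
    (v' : (G'.wrestrict (φ.preimage F) (φ.isSubgraph_preimage hF)).X)
    (hv' : (G'.wrestrict (φ.preimage F) (φ.isSubgraph_preimage hF)).IsVertex v') :
    ram φ v'.1 ≤
      ram (G' := G'.wrestrict _ (φ.isSubgraph_preimage hF)) (G := G.wrestrict F hF)
        (φ.restrictPreimage hF) v' := by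
  have hlost := hφ.card_tangents_sdiff_preimage_le
    ((restrict_isVertex (φ.isSubgraph_preimage hF) v').1 hv') F
  rw [ram_restrictPreimage hF]
  omega

end Weighted

end HarmonicHom

/-- Let `φ : (G',g') → (G,g)` be a finite harmonic morphism of weighted
graphs, `F` a subgraph of `G` and `F' = φ⁻¹(F)`.  Then `F'` is a subgraph of `G'`, the
restriction `φ|_{F'} : F' → F` (with restricted degrees and weights) is a finite harmonic
morphism, and `Ram_{φ|_{F'}}(v') ≥ Ram_φ(v')` for every vertex `v'` of `F'`.
In particular, if `φ` is effective then so is `φ|_{F'}`. -/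
theorem restriction_to_preimage_subgraph
    (G' G : WGraph) (φ : HarmonicHom G'.toPGraph G.toPGraph) (hfin : φ.Finite)
    (F : Finset G.X) (hF : G.toPGraph.IsSubgraph F) :
    ∃ hF' : G'.toPGraph.IsSubgraph (cfilter (fun x => φ.toFun x ∈ F) Finset.univ),
    ∃ ψ : HarmonicHom
        ((G'.wrestrict (cfilter (fun x => φ.toFun x ∈ F) Finset.univ) hF').toPGraph)
        ((G.wrestrict F hF).toPGraph),
      (∀ x, (ψ.toFun x).1 = φ.toFun x.1) ∧
      (∀ x, ψ.deg x = φ.deg x.1) ∧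
      ψ.Finite ∧
      (∀ v', (G'.wrestrict (cfilter (fun x => φ.toFun x ∈ F) Finset.univ)
          hF').toPGraph.IsVertex v' → ram φ v'.1 ≤ ram ψ v') ∧
      (Effective φ → Effective ψ) := by
  have hF' := φ.isSubgraph_preimage hF
  have hram := hfin.ram_le_ram_restrictPreimage hF
  refine ⟨hF', φ.restrictPreimage hF, fun _ => rfl, fun _ => rfl,
    hfin.restrictPreimage hF, hram, fun heff v' hv' => ?_⟩
  exact (heff v'.1 ((PGraph.restrict_isVertex hF' v').1 hv')).trans (hram v' hv')

end TropDR
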